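/- Let n ≥ 3, let f₁,...,fₙ be smooth with 3fᵢ + fⱼ nowhere zero for i ≠ j, and let φ be a smooth positive solution of φ_{,xᵢxᵢ}/φ − |∇φ|²/(2φ²) = φ² fᵢ, φ_{,xᵢxⱼ} = 0 (i ≠ j). Then for all i ≠ j: ∂/∂xᵢ ( f_{i,xⱼ}/(3fᵢ + fⱼ) ) = ∂/∂xⱼ ( f_{j,xᵢ}/(3fⱼ + fᵢ) ). -/

import Mathlib

noncomputable def pd {n : ℕ} (φ : (Fin n → ℝ) → ℝ) (i : Fin n) (x : Fin n → ℝ) : ℝ :=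
  fderiv ℝ φ x (Pi.single i 1)

variable {n : ℕ}

lemma pd_smooth {g : (Fin n → ℝ) → ℝ} (hg : ContDiff ℝ (⊤ : ℕ∞) g) (i : Fin n) :
    ContDiff ℝ (⊤ : ℕ∞) (pd g i) :=
  (hg.fderiv_right (by simp)).clm_apply contDiff_const

lemma pd_const (c : ℝ) (j : Fin n) (x : Fin n → ℝ) : pd (fun _ => c) j x = 0 := by
  simp [pd]

lemma pd_sub {f g : (Fin n → ℝ) → ℝ} {x : Fin n → ℝ} (hf : DifferentiableAt ℝ f x)
    (hg : DifferentiableAt ℝ g x) (j : Fin n) :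
    pd (fun y => f y - g y) j x = pd f j x - pd g j x := by
  simp [pd, fderiv_fun_sub hf hg]

lemma pd_neg (f : (Fin n → ℝ) → ℝ) (x : Fin n → ℝ) (j : Fin n) :
    pd (fun y => -f y) j x = -pd f j x := by
  simp [pd, fderiv_neg]

lemma pd_mul {f g : (Fin n → ℝ) → ℝ} {x : Fin n → ℝ} (hf : DifferentiableAt ℝ f x)
    (hg : DifferentiableAt ℝ g x) (j : Fin n) :
    pd (fun y => f y * g y) j x = f x * pd g j x + g x * pd f j x := by
  simp [pd, fderiv_fun_mul hf hg]

lemma pd_pow {f : (Fin n → ℝ) → ℝ} {x : Fin n → ℝ} (hf : DifferentiableAt ℝ f x)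
    (m : ℕ) (j : Fin n) :
    pd (fun y => f y ^ m) j x = m * f x ^ (m - 1) * pd f j x := by
  have h : HasFDerivAt (fun y => f y ^ m) (((m : ℝ) * f x ^ (m - 1)) • fderiv ℝ f x) x :=
    (hasDerivAt_pow m (f x)).comp_hasFDerivAt x hf.hasFDerivAt
  rw [pd, h.fderiv]
  simp [pd, mul_assoc]

lemma pd_div {f g : (Fin n → ℝ) → ℝ} {x : Fin n → ℝ} (hf : DifferentiableAt ℝ f x)
    (hg : DifferentiableAt ℝ g x) (hgx : g x ≠ 0) (j : Fin n) :
    pd (fun y => f y / g y) j x = (pd f j x * g x - f x * pd g j x) / g x ^ 2 := by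
  have hinv : HasFDerivAt (fun y => (g y)⁻¹) ((-((g x) ^ 2)⁻¹) • fderiv ℝ g x) x :=
    (hasDerivAt_inv hgx).comp_hasFDerivAt x hg.hasFDerivAt
  have h := hf.hasFDerivAt.mul hinv
  simp only [Pi.mul_def, ← div_eq_mul_inv] at h
  rw [pd, h.fderiv]
  simp only [ContinuousLinearMap.add_apply, ContinuousLinearMap.coe_smul', Pi.smul_apply,
    smul_eq_mul, pd]
  field_simp
  ring

lemma diffAt_div {f g : (Fin n → ℝ) → ℝ} {x : Fin n → ℝ} (hf : DifferentiableAt ℝ f x)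
    (hg : DifferentiableAt ℝ g x) (hgx : g x ≠ 0) :
    DifferentiableAt ℝ (fun y => f y / g y) x := by
  simp only [div_eq_mul_inv]
  exact hf.mul (hg.inv hgx)

lemma pd_sum {f : Fin n → (Fin n → ℝ) → ℝ} {x : Fin n → ℝ}
    (hf : ∀ k, DifferentiableAt ℝ (f k) x) (j : Fin n) :
    pd (fun y => ∑ k, f k y) j x = ∑ k, pd (f k) j x := by
  simp [pd, fderiv_fun_sum (fun k _ => hf k)]

lemma pd_comm {g : (Fin n → ℝ) → ℝ} (hg : ContDiff ℝ (⊤ : ℕ∞) g) (a b : Fin n) (x : Fin n → ℝ) :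
    pd (pd g a) b x = pd (pd g b) a x := by
  have hd : DifferentiableAt ℝ (fderiv ℝ g) x :=
    ((hg.fderiv_right (m := (⊤ : ℕ∞)) (by simp)).differentiable (by simp)).differentiableAt
  have h1 : ∀ (v : Fin n → ℝ) (w : Fin n → ℝ),
      fderiv ℝ (fun y => fderiv ℝ g y v) x w = fderiv ℝ (fderiv ℝ g) x w v := by
    intro v w
    rw [fderiv_clm_apply hd (differentiableAt_const v)]
    simp
  have hsymm := (hg.contDiffAt (x := x)).isSymmSndFDerivAt (by rw [minSmoothness_of_isRCLikeNormedField]; exact WithTop.coe_le_coe.mpr le_top)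
  show fderiv ℝ (fun y => fderiv ℝ g y (Pi.single a 1)) x (Pi.single b 1) = _
  rw [h1]
  rw [hsymm (Pi.single b 1) (Pi.single a 1)]
  exact (h1 _ _).symm

theorem stmt4 (n : ℕ) (hn : 3 ≤ n)
    (f : Fin n → (Fin n → ℝ) → ℝ)
    (hf : ∀ i, ContDiff ℝ (⊤ : ℕ∞) (f i))
    (hne : ∀ i j : Fin n, i ≠ j → ∀ x, 3 * f i x + f j x ≠ 0)
    (φ : (Fin n → ℝ) → ℝ) (hφs : ContDiff ℝ (⊤ : ℕ∞) φ) (hφpos : ∀ x, 0 < φ x)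
    (heq : ∀ i : Fin n, ∀ x, pd (pd φ i) i x / φ x
      - (∑ k, (pd φ k x) ^ 2) / (2 * φ x ^ 2) = φ x ^ 2 * f i x)
    (hmix : ∀ i j : Fin n, i ≠ j → ∀ x, pd (pd φ j) i x = 0) :
    ∀ i j : Fin n, i ≠ j → ∀ x,
      pd (fun y => pd (f i) j y / (3 * f i y + f j y)) i x
        = pd (fun y => pd (f j) i y / (3 * f j y + f i y)) j x := by
  have hφne : ∀ x, φ x ≠ 0 := fun x => (hφpos x).ne'
  have hφd : ∀ y, DifferentiableAt ℝ φ y := fun y => (hφs.differentiable (by simp)).differentiableAt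
  have hpdd : ∀ (k : Fin n) (y), DifferentiableAt ℝ (pd φ k) y := fun k y =>
    ((pd_smooth hφs k).differentiable (by simp)).differentiableAt
  -- the gradient-square function
  set S : (Fin n → ℝ) → ℝ := fun y => ∑ k, pd φ k y ^ 2 with hSdef
  have hSd : ∀ y, DifferentiableAt ℝ S y := fun y =>
    DifferentiableAt.fun_sum fun k _ => (hpdd k y).pow 2
  -- second pure derivatives from the equation
  have hpure : ∀ (i : Fin n) (y), pd (pd φ i) i y = φ y ^ 3 * f i y + S y / (2 * φ y) := by
    intro i y
    have h1 : φ y ≠ 0 := hφne y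
    have h : pd (pd φ i) i y / φ y - S y / (2 * φ y ^ 2) = φ y ^ 2 * f i y := heq i y
    field_simp at h
    have h2 : (pd (pd φ i) i y - (φ y ^ 3 * f i y + S y / (2 * φ y))) * φ y = 0 := by
      field_simp
      linear_combination h
    rcases mul_eq_zero.mp h2 with h3 | h3
    · linarith [sub_eq_zero.mp h3]
    · exact absurd h3 h1
  -- derivative of S
  have hSder : ∀ (j : Fin n) (y), pd S j y = 2 * pd φ j y * pd (pd φ j) j y := by
    intro j y
    rw [hSdef, pd_sum (fun k => (hpdd k y).fun_pow 2) j]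
    rw [Finset.sum_eq_single j]
    · rw [pd_pow (hpdd j y) 2 j]; push_cast; ring
    · intro k _ hk
      rw [pd_pow (hpdd k y) 2 j, hmix j k (Ne.symm hk) y]; ring
    · simp
  -- key computation: pd (f i) j = -(pd φ j) (3 f i + f j) / φ
  have key : ∀ (i j : Fin n), i ≠ j → ∀ y,
      pd (f i) j y = -(pd φ j y) * (3 * f i y + f j y) / φ y := by
    intro i j hij y
    have hAs : ContDiff ℝ (⊤ : ℕ∞) (pd (pd φ i) i) := pd_smooth (pd_smooth hφs i) i
    have hAd : ∀ z, DifferentiableAt ℝ (pd (pd φ i) i) z := fun z =>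
      (hAs.differentiable (by simp)).differentiableAt
    have hfieq : f i = fun z => (pd (pd φ i) i z / φ z - S z / (2 * φ z ^ 2)) / φ z ^ 2 := by
      funext z
      rw [heq i z]
      exact (mul_div_cancel_left₀ _ (pow_ne_zero 2 (hφne z))).symm
    -- third derivative vanishes
    have hA0 : pd (pd (pd φ i) i) j y = 0 := by
      rw [pd_comm (pd_smooth hφs i) i j y]
      have h1 : pd (pd φ i) j = fun _ => (0 : ℝ) := funext fun z => hmix j i hij.symm z
      rw [h1, pd_const]
    -- differentiability pieces
    have d1 : DifferentiableAt ℝ (fun z => pd (pd φ i) i z / φ z) y :=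
      diffAt_div (hAd y) (hφd y) (hφne y)
    have d2 : DifferentiableAt ℝ (fun z => (2:ℝ) * φ z ^ 2) y :=
      (differentiableAt_const 2).mul ((hφd y).pow 2)
    have d3 : DifferentiableAt ℝ (fun z => S z / (2 * φ z ^ 2)) y := by
      refine diffAt_div (hSd y) d2 ?_
      have := hφne y; positivity
    have hNd : DifferentiableAt ℝ (fun z => pd (pd φ i) i z / φ z - S z / (2 * φ z ^ 2)) y :=
      d1.sub d3
    -- compute
    conv_lhs => rw [hfieq]
    rw [pd_div hNd ((hφd y).fun_pow 2) (pow_ne_zero 2 (hφne y)) j]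
    rw [pd_sub d1 d3 j]
    rw [pd_div (hAd y) (hφd y) (hφne y) j]
    rw [pd_div (hSd y) d2 (by have := hφne y; positivity) j]
    rw [pd_pow (hφd y) 2 j]
    rw [pd_mul (differentiableAt_const (2:ℝ)) ((hφd y).fun_pow 2) j]
    rw [pd_pow (hφd y) 2 j, pd_const]
    rw [hA0, hSder j y, hpure i y, hpure j y]
    have h1 : φ y ≠ 0 := hφne y
    field_simp
    ring
  -- the quotient functions equal -(pd φ j / φ)
  have hfun : ∀ (i j : Fin n), i ≠ j →
      (fun y => pd (f i) j y / (3 * f i y + f j y)) = fun y => -(pd φ j y / φ y) := by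
    intro i j hij
    funext y
    rw [key i j hij y]
    have h1 : 3 * f i y + f j y ≠ 0 := hne i j hij y
    have h2 : φ y ≠ 0 := hφne y
    field_simp
  intro i j hij x
  rw [hfun i j hij, hfun j i hij.symm]
  have comp : ∀ (a b : Fin n), a ≠ b →
      pd (fun y => -(pd φ b y / φ y)) a x = pd φ a x * pd φ b x / φ x ^ 2 := by
    intro a b hab
    have := pd_neg (fun y => pd φ b y / φ y) x a
    rw [this, pd_div (hpdd b x) (hφd x) (hφne x) a, hmix a b hab x]
    ring
  rw [comp i j hij, comp j i hij.symm]
  ring
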